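/- Second-order expansion of the exponential-family KL divergence: for μ > 0 and small δ, D(Exp(μ) ‖ Exp(μ+δ)) = log(1 + δ/μ) + μ/(μ+δ) − 1 = δ²/(2μ²) + O(δ³). Hence the ratio of the KL divergence to the optimal Chernoff exponent max_s c(s,δ) = δ²/(8μ²) + O(δ³) tends to 4 as δ → 0. -/

import Mathlib

/-!
In the variable `x = δ / μ` both quantities are functions of `x` alone:
`D = log (1 + x) + (1 + x)⁻¹ - 1 = x² / 2 + O(x³)`, and for `-μ < δ`
`c (s, δ) = log (1 + s x) - s log (1 + x) = s (1 - s) x² / 2 + O(x³)` uniformly in `s ∈ [0, 1]`.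
Since `s (1 - s) ≤ 1 / 4` with equality at `s = 1 / 2`, the supremum is `x² / 8 + O(x³)`,
and the ratio of the leading coefficients is `4`.
-/

open Filter Asymptotics Topology Set

theorem abs_log_one_add_sub_le {x : ℝ} (hx : |x| ≤ 1 / 2) :
    |Real.log (1 + x) - (x - x ^ 2 / 2)| ≤ 2 * |x| ^ 3 := by
  have h := Real.abs_log_sub_add_sum_range_le (x := -x) (by rw [abs_neg]; linarith) 2
  simp only [Finset.sum_range_succ, Finset.sum_range_zero, abs_neg, sub_neg_eq_add] at h
  calc |Real.log (1 + x) - (x - x ^ 2 / 2)| = _ := by congr 1; push_cast; ring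
    _ ≤ |x| ^ 3 / (1 - |x|) := h
    _ ≤ 2 * |x| ^ 3 := by
      rw [div_le_iff₀ (by linarith)]
      nlinarith [pow_nonneg (abs_nonneg x) 3]

theorem abs_inv_one_add_sub_le {x : ℝ} (hx : |x| ≤ 1 / 2) :
    |(1 + x)⁻¹ - (1 - x + x ^ 2)| ≤ 2 * |x| ^ 3 := by
  have hx1 : 1 / 2 ≤ 1 + x := by linarith [(abs_le.mp hx).1]
  have h : (1 + x)⁻¹ - (1 - x + x ^ 2) = -x ^ 3 / (1 + x) := by
    field_simp; ring
  rw [h, abs_div, abs_neg, abs_pow, abs_of_pos (show 0 < 1 + x by linarith),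
    div_le_iff₀ (by linarith)]
  nlinarith [pow_nonneg (abs_nonneg x) 3]

theorem eventually_abs_le_half : ∀ᶠ x : ℝ in 𝓝 0, |x| ≤ 1 / 2 := by
  filter_upwards [Metric.closedBall_mem_nhds (0 : ℝ) (by norm_num : (0 : ℝ) < 1 / 2)] with x hx
  simpa using hx

theorem isBigO_log_one_add_add_inv_sub :
    (fun x : ℝ => Real.log (1 + x) + (1 + x)⁻¹ - 1 - x ^ 2 / 2) =O[𝓝 0] (· ^ 3) := by
  refine IsBigO.of_bound 4 ?_
  filter_upwards [eventually_abs_le_half] with x hx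
  rw [Real.norm_eq_abs, Real.norm_eq_abs, abs_pow]
  calc |Real.log (1 + x) + (1 + x)⁻¹ - 1 - x ^ 2 / 2|
      = |(Real.log (1 + x) - (x - x ^ 2 / 2)) + ((1 + x)⁻¹ - (1 - x + x ^ 2))| := by
        congr 1; ring
    _ ≤ 2 * |x| ^ 3 + 2 * |x| ^ 3 :=
        (abs_add_le _ _).trans (add_le_add (abs_log_one_add_sub_le hx) (abs_inv_one_add_sub_le hx))
    _ = 4 * |x| ^ 3 := by ring

theorem log_one_add_mul_sub_mul_log_le {x s : ℝ} (hx : |x| ≤ 1 / 2) (hs : s ∈ Icc (0 : ℝ) 1) :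
    Real.log (1 + s * x) - s * Real.log (1 + x) ≤ x ^ 2 / 8 + 4 * |x| ^ 3 := by
  obtain ⟨hs0, hs1⟩ := hs
  have hsx : |s * x| ≤ |x| := by
    rw [abs_mul, abs_of_nonneg hs0]; nlinarith [abs_nonneg x]
  have hsx3 : |s * x| ^ 3 ≤ |x| ^ 3 := pow_le_pow_left₀ (abs_nonneg _) hsx 3
  have hA := (abs_le.mp (abs_log_one_add_sub_le (hsx.trans hx))).2
  have hB := mul_le_mul_of_nonneg_left (abs_le.mp (abs_log_one_add_sub_le hx)).1 hs0
  nlinarith [sq_nonneg ((2 * s - 1) * x), pow_nonneg (abs_nonneg x) 3]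

theorem le_log_one_add_half_sub {x : ℝ} (hx : |x| ≤ 1 / 2) :
    x ^ 2 / 8 - 2 * |x| ^ 3 ≤ Real.log (1 + 1 / 2 * x) - 1 / 2 * Real.log (1 + x) := by
  have hhalf : |1 / 2 * x| = |x| / 2 := by rw [abs_mul]; norm_num; ring
  have hA := (abs_le.mp (abs_log_one_add_sub_le (x := 1 / 2 * x) (by rw [hhalf]; linarith))).1
  have hB := (abs_le.mp (abs_log_one_add_sub_le hx)).2
  rw [hhalf] at hA
  nlinarith [pow_nonneg (abs_nonneg x) 3]

theorem isBigO_sSup_log_one_add_mul_sub :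
    (fun x : ℝ => sSup ((fun s => Real.log (1 + s * x) - s * Real.log (1 + x)) '' Icc 0 1)
      - x ^ 2 / 8) =O[𝓝 0] (· ^ 3) := by
  refine IsBigO.of_bound 4 ?_
  filter_upwards [eventually_abs_le_half] with x hx
  rw [Real.norm_eq_abs, Real.norm_eq_abs, abs_pow, abs_le]
  have hhalf : (1 / 2 : ℝ) ∈ Icc 0 1 := by norm_num
  have hbdd : ∀ y ∈ (fun s => Real.log (1 + s * x) - s * Real.log (1 + x)) '' Icc 0 1,
      y ≤ x ^ 2 / 8 + 4 * |x| ^ 3 := by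
    rintro _ ⟨s, hs, rfl⟩
    exact log_one_add_mul_sub_mul_log_le hx hs
  have hle := csSup_le (Nonempty.image _ ⟨_, hhalf⟩) hbdd
  have hge := (le_log_one_add_half_sub hx).trans (le_csSup ⟨_, hbdd⟩ (mem_image_of_mem _ hhalf))
  constructor <;> nlinarith [pow_nonneg (abs_nonneg x) 3]

theorem Asymptotics.IsBigO.comp_div_cube {F : ℝ → ℝ} (hF : F =O[𝓝 0] (· ^ 3)) (μ : ℝ) :
    (fun δ => F (δ / μ)) =O[𝓝 0] (· ^ 3) := by
  have hlim : Tendsto (fun δ : ℝ => δ / μ) (𝓝 0) (𝓝 0) := by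
    simpa using (continuous_id.div_const μ).tendsto 0
  refine (hF.comp_tendsto hlim).trans <|
    (isBigO_const_mul_self (μ ^ 3)⁻¹ (· ^ 3) (𝓝 0)).congr_left fun δ => by
      simp only [Function.comp_apply]; ring

theorem tendsto_div_sq_of_isBigO_sub {f : ℝ → ℝ} {p : ℝ}
    (hf : (fun δ => f δ - δ ^ 2 / p) =O[𝓝 0] (· ^ 3)) :
    Tendsto (fun δ => f δ / δ ^ 2) (𝓝[≠] 0) (𝓝 p⁻¹) := by
  rw [← tendsto_sub_nhds_zero_iff]
  have hdiv := (hf.mono nhdsWithin_le_nhds).mul (isBigO_refl (fun δ : ℝ => (δ ^ 2)⁻¹) (𝓝[≠] 0))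
  refine (hdiv.congr' ?_ ?_).trans_tendsto
    ((continuous_id.tendsto 0).mono_left nhdsWithin_le_nhds)
  all_goals filter_upwards [self_mem_nhdsWithin] with δ (hδ : δ ≠ 0)
  · field_simp
  · field_simp; simp

theorem tendsto_div_of_isBigO_sub_sq {f g : ℝ → ℝ} {p q : ℝ} (hq : q ≠ 0)
    (hf : (fun δ => f δ - δ ^ 2 / p) =O[𝓝 0] (· ^ 3))
    (hg : (fun δ => g δ - δ ^ 2 / q) =O[𝓝 0] (· ^ 3)) :
    Tendsto (fun δ => f δ / g δ) (𝓝[≠] 0) (𝓝 (q / p)) := by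
  rw [← inv_div_inv]
  refine ((tendsto_div_sq_of_isBigO_sub hf).div (tendsto_div_sq_of_isBigO_sub hg)
    (inv_ne_zero hq)).congr' ?_
  filter_upwards [self_mem_nhdsWithin] with δ (hδ : δ ≠ 0)
  exact div_div_div_cancel_right₀ (pow_ne_zero 2 hδ) _ _

theorem log_convex_comb_sub_eq {μ δ s : ℝ} (hμ : 0 < μ) (hδ : -μ < δ) (hs : s ∈ Icc (0 : ℝ) 1) :
    Real.log ((1 - s) * μ + s * (μ + δ)) - (1 - s) * Real.log μ - s * Real.log (μ + δ) =
      Real.log (1 + s * (δ / μ)) - s * Real.log (1 + δ / μ) := by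
  have hx : 0 < 1 + δ / μ := by rw [one_add_div hμ.ne']; exact div_pos (by linarith) hμ
  have hsx : 0 < 1 + s * (δ / μ) := by
    rcases hs.2.lt_or_eq with hs1 | rfl
    · nlinarith [mul_nonneg hs.1 hx.le]
    · simpa using hx
  rw [show (1 - s) * μ + s * (μ + δ) = μ * (1 + s * (δ / μ)) by field_simp; ring,
    show μ + δ = μ * (1 + δ / μ) by field_simp,
    Real.log_mul hμ.ne' hsx.ne', Real.log_mul hμ.ne' hx.ne']
  ring

/-- Second-order expansion of the exponential-family KL divergence
`D(δ) = D(Exp(μ) ‖ Exp(μ+δ)) = log(1 + δ/μ) + μ/(μ+δ) − 1 = δ²/(2μ²) + O(δ³)`,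
and the optimal Chernoff exponent `max_{s∈[0,1]} c(s,δ) = δ²/(8μ²) + O(δ³)`,
so the ratio `D(δ)/max_s c(s,δ)` tends to `4` as `δ → 0`. -/
theorem kl_vs_chernoff_factor_four (μ : ℝ) (hμ : 0 < μ)
    (D : ℝ → ℝ) (hD : ∀ δ : ℝ, D δ = Real.log (1 + δ / μ) + μ / (μ + δ) - 1)
    (c : ℝ → ℝ → ℝ)
    (hc : ∀ s δ : ℝ, c s δ =
      Real.log ((1 - s) * μ + s * (μ + δ)) - (1 - s) * Real.log μ - s * Real.log (μ + δ))
    (Cmax : ℝ → ℝ)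
    (hCmax : ∀ δ : ℝ, Cmax δ = sSup ((fun s => c s δ) '' Set.Icc (0:ℝ) 1)) :
    ((fun δ => D δ - δ ^ 2 / (2 * μ ^ 2)) =O[𝓝 (0:ℝ)] fun δ => δ ^ 3) ∧
    ((fun δ => Cmax δ - δ ^ 2 / (8 * μ ^ 2)) =O[𝓝 (0:ℝ)] fun δ => δ ^ 3) ∧
    Tendsto (fun δ => D δ / Cmax δ) (𝓝[≠] (0:ℝ)) (𝓝 4) := by
  have hD_sq : (fun δ => D δ - δ ^ 2 / (2 * μ ^ 2)) =O[𝓝 0] (· ^ 3) := by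
    refine (isBigO_log_one_add_add_inv_sub.comp_div_cube μ).congr_left fun δ => ?_
    rw [hD, one_add_div hμ.ne', inv_div, div_pow]
    ring
  have hCmax_sq : (fun δ => Cmax δ - δ ^ 2 / (8 * μ ^ 2)) =O[𝓝 0] (· ^ 3) := by
    refine (isBigO_sSup_log_one_add_mul_sub.comp_div_cube μ).congr' ?_ .rfl
    filter_upwards [lt_mem_nhds (neg_neg_of_pos hμ)] with δ hδ
    rw [hCmax, image_congr fun s hs => (hc s δ).trans (log_convex_comb_sub_eq hμ hδ hs), div_pow]
    ring
  refine ⟨hD_sq, hCmax_sq, ?_⟩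
  convert tendsto_div_of_isBigO_sub_sq (by positivity) hD_sq hCmax_sq using 2
  field_simp
  norm_num
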